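/- The sequences (a_{n,s})_{n≥1} with a_{n,s} = (ns)^{-n+(-1)^n}, for s ranging over (1,∞), are linearly independent in the space of real sequences; consequently their span is a vector space of dimension continuum consisting (apart from 0) of absolutely summable sequences for which the ratio test fails. -/

import Mathlib

open Filter

/-- The sequence `a n s = (n s)^{-n + (-1)^n}`. -/
noncomputable def seqA (n : ℕ) (s : ℝ) : ℝ :=
  ((n : ℝ) * s) ^ (-(n : ℤ) + (-1 : ℤ) ^ n)

open Topology Asymptotics

/-!
For a nonzero finite combination `x = ∑ c_s a_{·,s}` the term with the smallest `s = t`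
dominates: `a_{n,s} / a_{n,t} = (s/t)^{-n+(-1)^n} → 0` for `s > t`, so `x_n / a_{n,t} → c_t ≠ 0`.
This gives linear independence at once, summability by comparison with `a_{n,t} ≤ 2^{-n}`, and
makes the ratios `|x_{n+1} / x_n|` asymptotically equivalent to those of `a_{·,t}`. Since the
exponent alternates between `-n-1` and `-n+1`, the latter tend to `∞` from odd to even `n` and to
`0` from even to odd `n`.
-/

lemma seqA_pos {n : ℕ} {s : ℝ} (hn : n ≠ 0) (hs : 0 < s) : 0 < seqA n s :=
  zpow_pos (mul_pos (by positivity) hs) _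

lemma neg_natCast_add_neg_one_pow_le (n : ℕ) : -(n : ℤ) + (-1) ^ n ≤ 1 - n := by
  rcases neg_one_pow_eq_or ℤ n with h | h <;> rw [h] <;> omega

lemma seqA_two_mul_add_one (m : ℕ) (s : ℝ) :
    seqA (2 * m + 1) s = (((2 * m + 1 : ℝ) * s) ^ (2 * m + 2))⁻¹ := by
  rw [seqA, (odd_two_mul_add_one m).neg_one_pow, ← zpow_natCast, ← zpow_neg]
  push_cast
  ring_nf

lemma seqA_two_mul_add_two (m : ℕ) (s : ℝ) :
    seqA (2 * m + 2) s = (((2 * m + 2 : ℝ) * s) ^ (2 * m + 1))⁻¹ := by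
  rw [seqA, (show Even (2 * m + 2) from ⟨m + 1, by ring⟩).neg_one_pow, ← zpow_natCast,
    ← zpow_neg]
  push_cast
  ring_nf

lemma seqA_succ_le_half_pow {n : ℕ} {s : ℝ} (hs : 2 ≤ (n + 1) * s) :
    seqA (n + 1) s ≤ (1 / 2) ^ n := by
  have hexp : -((n + 1 : ℕ) : ℤ) + (-1) ^ (n + 1) ≤ -(n : ℤ) := by
    have := neg_natCast_add_neg_one_pow_le (n + 1)
    push_cast at this ⊢
    omega
  calc seqA (n + 1) s ≤ ((n + 1) * s) ^ (-(n : ℤ)) := by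
        rw [seqA]; push_cast
        exact zpow_le_zpow_right₀ (by linarith) (by exact_mod_cast hexp)
    _ = (((n + 1) * s) ^ n)⁻¹ := by rw [zpow_neg, zpow_natCast]
    _ ≤ ((2 : ℝ) ^ n)⁻¹ := by gcongr
    _ = (1 / 2) ^ n := by rw [one_div, inv_pow]

lemma summable_seqA_succ {s : ℝ} (hs : 0 < s) : Summable fun n => seqA (n + 1) s := by
  have hlarge : ∀ᶠ n : ℕ in atTop, 2 ≤ ((n : ℝ) + 1) * s :=
    ((tendsto_natCast_atTop_atTop.atTop_add tendsto_const_nhds).atTop_mul_const hs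
      ).eventually_ge_atTop 2
  refine .of_norm_bounded_eventually_nat summable_geometric_two ?_
  filter_upwards [hlarge] with n hn
  rw [Real.norm_of_nonneg (seqA_pos n.succ_ne_zero hs).le]
  exact seqA_succ_le_half_pow hn

lemma tendsto_seqA_div_seqA {s t : ℝ} (ht : 0 < t) (hts : t < s) :
    Tendsto (fun n => seqA n s / seqA n t) atTop (𝓝 0) := by
  set r := s / t
  have hr : 1 < r := (one_lt_div ht).2 hts
  have hr0 : 0 < r := one_pos.trans hr
  have hbound : ∀ n : ℕ, n ≠ 0 → seqA n s / seqA n t ≤ r * (r⁻¹) ^ n := fun n hn =>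
    calc seqA n s / seqA n t = r ^ (-(n : ℤ) + (-1) ^ n) := by
          rw [seqA, seqA, ← div_zpow, mul_div_mul_left _ _ (by positivity)]
      _ ≤ r ^ (1 - n : ℤ) := zpow_le_zpow_right₀ hr.le (neg_natCast_add_neg_one_pow_le n)
      _ = r * (r⁻¹) ^ n := by
          rw [zpow_sub₀ hr0.ne', zpow_one, zpow_natCast, inv_pow, div_eq_mul_inv]
  have hgeom : Tendsto (fun n : ℕ => r * (r⁻¹) ^ n) atTop (𝓝 0) := by
    simpa using (tendsto_pow_atTop_nhds_zero_of_lt_one (inv_nonneg.2 hr0.le)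
      (inv_lt_one_of_one_lt₀ hr)).const_mul r
  refine squeeze_zero' ?_ ?_ hgeom
  · filter_upwards [eventually_ne_atTop 0] with n hn
    exact (div_pos (seqA_pos hn (ht.trans hts)) (seqA_pos hn ht)).le
  · filter_upwards [eventually_ne_atTop 0] with n hn
    exact hbound n hn

lemma tendsto_seqA_two_mul_add_two_div_atTop {s : ℝ} (hs : 0 < s) :
    Tendsto (fun m : ℕ => seqA (2 * m + 2) s / seqA (2 * m + 1) s) atTop atTop := by
  have hk : Tendsto (fun m : ℕ => 2 * m + 1) atTop atTop :=
    tendsto_atTop_mono (fun m => by simp only [id]; omega) tendsto_id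
  have hlin : Tendsto (fun m : ℕ => (2 * m + 1 : ℝ) * s) atTop atTop := by
    refine Tendsto.atTop_mul_const hs ?_
    exact ((tendsto_natCast_atTop_atTop (R := ℝ)).comp hk).congr fun m => by simp
  have hexp : Tendsto (fun m : ℕ => ((1 + 1 / (2 * m + 1 : ℝ)) ^ (2 * m + 1))⁻¹) atTop
      (𝓝 (Real.exp 1)⁻¹) := by
    refine ((Real.tendsto_one_add_div_pow_exp 1).comp hk).inv₀ (Real.exp_pos 1).ne' |>.congr ?_
    intro m; simp
  -- with `k = 2m+1`: `(k s)^(k+1) / ((k+1) s)^k = k s / (1 + 1/k)^k`, and `(1 + 1/k)^k → e`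
  refine (hlin.atTop_mul_pos (inv_pos.2 (Real.exp_pos 1)) hexp).congr fun m => ?_
  have hratio : 1 + 1 / (2 * m + 1 : ℝ) = (2 * m + 2) * s / ((2 * m + 1) * s) := by
    field_simp; ring
  rw [seqA_two_mul_add_one, seqA_two_mul_add_two, hratio, inv_div_inv, div_pow, inv_div,
    pow_succ' _ (2 * m + 1), mul_div_assoc]

lemma tendsto_seqA_two_mul_add_three_div_zero {s : ℝ} (hs : 0 < s) :
    Tendsto (fun m : ℕ => seqA (2 * m + 3) s / seqA (2 * m + 2) s) atTop (𝓝 0) := by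
  have hlin : Tendsto (fun m : ℕ => (2 * m + 3 : ℝ) * s) atTop atTop := by
    refine Tendsto.atTop_mul_const hs ?_
    exact tendsto_atTop_add_const_right _ _ (tendsto_natCast_atTop_atTop.const_mul_atTop two_pos)
  have hbound : ∀ m : ℕ,
      seqA (2 * m + 3) s / seqA (2 * m + 2) s ≤ (((2 * m + 3 : ℝ) * s) ^ 3)⁻¹ := fun m => by
      have hodd : seqA (2 * m + 3) s = (((2 * m + 3 : ℝ) * s) ^ (2 * m + 4))⁻¹ := by
        rw [show 2 * m + 3 = 2 * (m + 1) + 1 by ring, seqA_two_mul_add_one]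
        push_cast; ring_nf
      rw [hodd, seqA_two_mul_add_two, inv_div_inv]
      calc ((2 * m + 2 : ℝ) * s) ^ (2 * m + 1) / ((2 * m + 3) * s) ^ (2 * m + 4)
          ≤ ((2 * m + 3 : ℝ) * s) ^ (2 * m + 1) / ((2 * m + 3) * s) ^ (2 * m + 4) := by
            gcongr; linarith
        _ = (((2 * m + 3 : ℝ) * s) ^ 3)⁻¹ := by
            rw [pow_add _ (2 * m + 1) 3, div_mul_cancel_left₀ (by positivity)]
  refine squeeze_zero (fun m => (div_pos (seqA_pos (by omega) hs) (seqA_pos (by omega) hs)).le)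
    hbound ?_
  exact tendsto_inv_atTop_zero.comp ((tendsto_pow_atTop three_ne_zero).comp hlin)

lemma isEquivalent_abs_ratio {x p : ℕ → ℝ} {L : ℝ} (hL : L ≠ 0)
    (hx : Tendsto (fun n => x n / p n) atTop (𝓝 L)) :
    (fun n => |x (n + 1) / x n|) ~[atTop] fun n => |p (n + 1) / p n| := by
  refine isEquivalent_of_tendsto_one ?_
  have h := ((hx.comp (tendsto_add_atTop_nat 1)).div hx hL).abs
  rw [div_self hL, abs_one] at h
  refine h.congr fun n => ?_
  simp only [Function.comp_apply, Pi.div_apply, abs_div]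
  exact div_div_div_comm _ _ _ _

lemma liminf_coe_eq_zero_of_tendsto_comp {α β : Type*} {F : Filter α} {G : Filter β} [NeBot G]
    {u : α → ℝ} (hu : ∀ a, 0 ≤ u a) {φ : β → α} (hφ : Tendsto φ G F)
    (h : Tendsto (u ∘ φ) G (𝓝 0)) : liminf (fun a => (u a : EReal)) F = 0 := by
  refine le_antisymm ?_ (le_liminf_of_le (by isBoundedDefault)
    (Eventually.of_forall fun a => EReal.coe_nonneg.2 (hu a)))
  exact MapClusterPt.liminf_le
    ((continuous_coe_real_ereal.tendsto 0 |>.comp h).mapClusterPt.of_comp hφ)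

lemma limsup_coe_eq_top_of_tendsto_comp {α β : Type*} {F : Filter α} {G : Filter β} [NeBot G]
    {u : α → ℝ} {φ : β → α} (hφ : Tendsto φ G F) (h : Tendsto (u ∘ φ) G atTop) :
    limsup (fun a => (u a : EReal)) F = ⊤ :=
  top_le_iff.1 (MapClusterPt.le_limsup
    ((EReal.tendsto_coe_nhds_top_iff.2 h).mapClusterPt.of_comp hφ))

section RatioTest

variable {x : ℕ → ℝ} {t L : ℝ}

lemma summable_abs_of_tendsto_div_seqA (ht : 0 < t)
    (hx : Tendsto (fun n => x n / seqA (n + 1) t) atTop (𝓝 L)) : Summable fun n => |x n| := by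
  refine summable_abs_iff.2 (summable_of_isBigO_nat (summable_seqA_succ ht) ?_)
  exact isBigO_of_div_tendsto_nhds
    (Eventually.of_forall fun n h => absurd h (seqA_pos n.succ_ne_zero ht).ne') L hx

lemma liminf_abs_ratio_eq_zero_of_tendsto_div_seqA (ht : 0 < t) (hL : L ≠ 0)
    (hx : Tendsto (fun n => x n / seqA (n + 1) t) atTop (𝓝 L)) :
    liminf (fun n : ℕ => (↑|x (n + 1) / x n| : EReal)) atTop = 0 := by
  have hφ : Tendsto (fun m : ℕ => 2 * m + 1) atTop atTop :=
    tendsto_atTop_mono (fun m => by simp only [id]; omega) tendsto_id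
  refine liminf_coe_eq_zero_of_tendsto_comp (fun n => abs_nonneg _) hφ ?_
  have hp := (tendsto_seqA_two_mul_add_three_div_zero ht).abs
  rw [abs_zero] at hp
  exact ((isEquivalent_abs_ratio hL hx).comp_tendsto hφ).symm.tendsto_nhds
    (hp.congr fun m => rfl)

lemma limsup_abs_ratio_eq_top_of_tendsto_div_seqA (ht : 0 < t) (hL : L ≠ 0)
    (hx : Tendsto (fun n => x n / seqA (n + 1) t) atTop (𝓝 L)) :
    limsup (fun n : ℕ => (↑|x (n + 1) / x n| : EReal)) atTop = ⊤ := by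
  have hφ : Tendsto (fun m : ℕ => 2 * m) atTop atTop :=
    tendsto_atTop_mono (fun m => by simp only [id]; omega) tendsto_id
  refine limsup_coe_eq_top_of_tendsto_comp hφ ?_
  exact ((isEquivalent_abs_ratio hL hx).comp_tendsto hφ).symm.tendsto_atTop
    (tendsto_abs_atTop_atTop.comp (tendsto_seqA_two_mul_add_two_div_atTop ht))

end RatioTest

section LinearCombination

variable {ι : Type*} {σ : ι → ℝ}

lemma exists_tendsto_linearCombination_div_seqA (hσ : Function.Injective σ)
    (hpos : ∀ i, 0 < σ i) {c : ι →₀ ℝ} (hc : c ≠ 0) :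
    ∃ i₀, c i₀ ≠ 0 ∧ Tendsto (fun n => Finsupp.linearCombination ℝ
      (fun i n => seqA (n + 1) (σ i)) c n / seqA (n + 1) (σ i₀)) atTop (𝓝 (c i₀)) := by
  classical
  obtain ⟨i₀, hi₀, hmin⟩ := c.support.exists_min_image σ (Finsupp.support_nonempty_iff.2 hc)
  refine ⟨i₀, Finsupp.mem_support_iff.1 hi₀, ?_⟩
  have hsplit : ∀ n, Finsupp.linearCombination ℝ (fun i n => seqA (n + 1) (σ i)) c n
      / seqA (n + 1) (σ i₀)
      = c i₀ + ∑ i ∈ c.support.erase i₀, c i * (seqA (n + 1) (σ i) / seqA (n + 1) (σ i₀)) :=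
    fun n => by
      rw [Finsupp.linearCombination_apply, Finsupp.sum, Finset.sum_apply, Finset.sum_div,
        ← Finset.add_sum_erase _ _ hi₀]
      simp only [Pi.smul_apply, smul_eq_mul, mul_div_assoc,
        div_self (seqA_pos n.succ_ne_zero (hpos i₀)).ne', mul_one]
  have hrest : Tendsto (fun n => ∑ i ∈ c.support.erase i₀,
      c i * (seqA (n + 1) (σ i) / seqA (n + 1) (σ i₀))) atTop
      (𝓝 (∑ i ∈ c.support.erase i₀, c i * 0)) :=
    tendsto_finsetSum _ fun i hi =>
      ((tendsto_seqA_div_seqA (hpos i₀) ((hmin i (Finset.mem_of_mem_erase hi)).lt_of_ne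
        (hσ.ne (Finset.ne_of_mem_erase hi).symm))).comp (tendsto_add_atTop_nat 1)).const_mul
        (c i)
  simp only [mul_zero, Finset.sum_const_zero] at hrest
  simpa only [hsplit, add_zero] using tendsto_const_nhds.add hrest

theorem linearIndependent_seqA (hσ : Function.Injective σ) (hpos : ∀ i, 0 < σ i) :
    LinearIndependent ℝ fun i n => seqA (n + 1) (σ i) := by
  rw [linearIndependent_iff]
  intro c hc
  by_contra hc0
  obtain ⟨i₀, hci₀, hlim⟩ := exists_tendsto_linearCombination_div_seqA hσ hpos hc0
  simp only [hc, Pi.zero_apply, zero_div] at hlim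
  exact hci₀ (tendsto_nhds_unique hlim tendsto_const_nhds)

end LinearCombination

theorem stmt_12 :
    LinearIndependent ℝ
      (fun s : {s : ℝ // 1 < s} => fun n : ℕ => seqA (n + 1) s.1) ∧
    Module.rank ℝ
      (Submodule.span ℝ
        (Set.range fun s : {s : ℝ // 1 < s} => fun n : ℕ => seqA (n + 1) s.1))
      = Cardinal.continuum ∧
    ∀ x ∈ Submodule.span ℝ
        (Set.range fun s : {s : ℝ // 1 < s} => fun n : ℕ => seqA (n + 1) s.1),
      x ≠ 0 →
        Summable (fun n => |x n|) ∧
        liminf (fun n : ℕ => (↑|x (n + 1) / x n| : EReal)) atTop = 0 ∧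
        limsup (fun n : ℕ => (↑|x (n + 1) / x n| : EReal)) atTop = ⊤ := by
  have hpos : ∀ s : {s : ℝ // 1 < s}, 0 < s.1 := fun s => one_pos.trans s.2
  have hli := linearIndependent_seqA Subtype.val_injective hpos
  refine ⟨hli, ?_, fun x hx hx0 => ?_⟩
  · rw [rank_span hli, Cardinal.mk_range_eq _ hli.injective]
    exact Cardinal.mk_Ioi_real 1
  · rw [← Finsupp.range_linearCombination] at hx
    obtain ⟨c, rfl⟩ := hx
    obtain ⟨s, hs, hlim⟩ := exists_tendsto_linearCombination_div_seqA Subtype.val_injective hpos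
      (c := c) (by rintro rfl; exact hx0 (map_zero _))
    exact ⟨summable_abs_of_tendsto_div_seqA (hpos s) hlim,
      liminf_abs_ratio_eq_zero_of_tendsto_div_seqA (hpos s) hs hlim,
      limsup_abs_ratio_eq_top_of_tendsto_div_seqA (hpos s) hs hlim⟩
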